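/- (Section 5.1, algebraic form) Let J be an invertible skew-symmetric real n×n matrix, M a symmetric real n×n matrix, and S_1,…,S_s symmetric real n×n matrices. Set K = J^{−1}·M and F_i = J^{−1}·S_i for i = 1,…,s. Then J·K·J^{−1} = −Kᵀ and J·F_i·J^{−1} = −F_iᵀ for all i, and consequently the VP condition holds for every real s×s matrix A: det(I_{sn} − h·M(A;F)) = det(exp(h·K))·det(I_{sn} + h·M(Aᵀ;F)). -/

import Mathlib

open Matrix

/-- The block matrix `M(A;F)` whose `(i,j)` block is `a_{ij}·exp((c_i−c_j)·h·K)·F_j`. -/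
noncomputable def Mblk {n s : ℕ} (h : ℝ) (K : Matrix (Fin n) (Fin n) ℝ) (c : Fin s → ℝ)
    (A : Matrix (Fin s) (Fin s) ℝ) (F : Fin s → Matrix (Fin n) (Fin n) ℝ) :
    Matrix (Fin s × Fin n) (Fin s × Fin n) ℝ :=
  fun p q => A p.1 q.1 * (NormedSpace.exp (((c p.1 - c q.1) * h) • K) * F q.1) p.2 q.2

/-!
A matrix of the form `J⁻¹ Y` with `Y` symmetric satisfies `J X J⁻¹ = -Xᵀ`, and this relation
is preserved by conjugation with `exp (t • K)` when `K` satisfies it. Writing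
`E = diag (exp (cᵢ h K))` and `Gⱼ = exp (-cⱼ h K) Fⱼ exp (cⱼ h K)`, we get
`M(A;F) = E ((A ⊗ I) diag G) E⁻¹`, so `E` drops out of both determinants. Transposing
`1 - h (A ⊗ I) diag G`, conjugating by `diag J` and applying Sylvester's identity
`det (1 + XY) = det (1 + YX)` turns it into `1 + h (Aᵀ ⊗ I) diag G`. Finally `det (exp (h K)) = 1`:
it is `± 1` because `exp (h K)` is conjugate to the transpose of its inverse, and it is a square.
-/

open NormedSpace
open scoped Kronecker

namespace Matrix

section Conjugation

variable {m R : Type*} [Fintype m] [DecidableEq m] [CommRing R] {J : Matrix m m R}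

theorem conj_inv_mul_eq_neg_transpose (hJ : IsUnit J) (hJskew : Jᵀ = -J) {Y : Matrix m m R}
    (hY : Yᵀ = Y) : J * (J⁻¹ * Y) * J⁻¹ = -(J⁻¹ * Y)ᵀ := by
  have hJdet := (isUnit_iff_isUnit_det J).mp hJ
  have hinv : (-J)⁻¹ = -J⁻¹ :=
    inv_eq_right_inv (by rw [_root_.neg_mul_neg, mul_nonsing_inv J hJdet])
  rw [transpose_mul, hY, transpose_nonsing_inv, hJskew, hinv, ← Matrix.mul_assoc,
    mul_nonsing_inv J hJdet, Matrix.one_mul, Matrix.mul_neg, neg_neg]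

theorem inv_mul_transpose_mul_eq_neg (hJ : IsUnit J) {X : Matrix m m R}
    (hX : J * X * J⁻¹ = -Xᵀ) : J⁻¹ * Xᵀ * J = -X := by
  have hJdet := (isUnit_iff_isUnit_det J).mp hJ
  rw [← neg_neg Xᵀ, ← hX]
  simp [Matrix.mul_assoc, nonsing_inv_mul J hJdet, ← Matrix.mul_assoc J⁻¹ J]

theorem conj_mul_mul_eq_neg_transpose (hJ : IsUnit J) {P X Q : Matrix m m R}
    (hP : J * P * J⁻¹ = Qᵀ) (hX : J * X * J⁻¹ = -Xᵀ) (hQ : J * Q * J⁻¹ = Pᵀ) :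
    J * (P * X * Q) * J⁻¹ = -(P * X * Q)ᵀ := by
  have hJdet := (isUnit_iff_isUnit_det J).mp hJ
  have hsplit : J * (P * X * Q) * J⁻¹ = (J * P * J⁻¹) * (J * X * J⁻¹) * (J * Q * J⁻¹) := by
    simp only [Matrix.mul_assoc, nonsing_inv_mul_cancel_left J _ hJdet]
  rw [hsplit, hP, hX, hQ, transpose_mul, transpose_mul]
  noncomm_ring

end Conjugation

section Exponential

variable {m 𝕂 : Type*} [Fintype m] [DecidableEq m] [RCLike 𝕂]

theorem exp_smul_mul_exp_smul (K : Matrix m m 𝕂) (a b : 𝕂) :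
    exp (a • K) * exp (b • K) = exp ((a + b) • K) := by
  rw [add_smul, Matrix.exp_add_of_commute]
  exact ((Commute.refl K).smul_left a).smul_right b

theorem conj_exp_smul {J K : Matrix m m 𝕂} (hJ : IsUnit J) (hK : J * K * J⁻¹ = -Kᵀ) (t : 𝕂) :
    J * exp (t • K) * J⁻¹ = (exp ((-t) • K))ᵀ := by
  rw [← exp_conj J _ hJ, Matrix.mul_smul, Matrix.smul_mul, hK, ← exp_transpose,
    transpose_smul, neg_smul, smul_neg]

theorem det_exp_smul_eq_one {J K : Matrix m m ℝ} (hJ : IsUnit J) (hK : J * K * J⁻¹ = -Kᵀ)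
    (t : ℝ) :
    (exp (t • K)).det = 1 := by
  have hneg : (exp ((-t) • K)).det = (exp (t • K)).det := by
    rw [← det_transpose, ← conj_exp_smul hJ hK, det_conj hJ]
  have hsq : (exp ((-t) • K)).det * (exp (t • K)).det = 1 := by
    rw [← det_mul, exp_smul_mul_exp_smul, neg_add_cancel, zero_smul, exp_zero, det_one]
  rw [hneg] at hsq
  have hnonneg : 0 ≤ (exp (t • K)).det := by
    rw [← add_halves t, ← exp_smul_mul_exp_smul, det_mul]
    exact mul_self_nonneg _
  nlinarith

end Exponential

section Blocks

variable {ι m R : Type*}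

/-- The block-diagonal matrix `diag (D i)`, indexed like `Mblk` with the block index first
(`Matrix.blockDiagonal` puts it second). -/
def compDiagonal [DecidableEq ι] [Zero R] (D : ι → Matrix m m R) : Matrix (ι × m) (ι × m) R :=
  comp ι ι m m R (diagonal D)

theorem compDiagonal_mul_compDiagonal [Fintype ι] [DecidableEq ι] [Fintype m] [Semiring R]
    (D D' : ι → Matrix m m R) :
    compDiagonal D * compDiagonal D' = compDiagonal fun i => D i * D' i := by
  simp only [compDiagonal, ← compRingEquiv_apply, ← map_mul, diagonal_mul_diagonal]

theorem compDiagonal_const [DecidableEq ι] [DecidableEq m] [MulZeroOneClass R] (P : Matrix m m R) :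
    compDiagonal (fun _ : ι => P) = (1 : Matrix ι ι R) ⊗ₖ P := by
  ext ⟨i, p⟩ ⟨j, q⟩
  by_cases hij : i = j <;> simp [compDiagonal, hij]

theorem transpose_compDiagonal [DecidableEq ι] [Zero R] (D : ι → Matrix m m R) :
    (compDiagonal D)ᵀ = compDiagonal fun i => (D i)ᵀ := by
  rw [compDiagonal, compDiagonal, transpose_comp, diagonal_transpose, diagonal_map transpose_zero]

theorem compDiagonal_neg [DecidableEq ι] [NegZeroClass R] (D : ι → Matrix m m R) :
    compDiagonal (fun i => -D i) = -compDiagonal D := by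
  ext ⟨i, p⟩ ⟨j, q⟩
  by_cases hij : i = j <;> simp [compDiagonal, hij]

theorem kronecker_one_eq_comp [Fintype m] [DecidableEq m] [CommSemiring R] (A : Matrix ι ι R) :
    A ⊗ₖ (1 : Matrix m m R) = comp ι ι m m R (A.map (algebraMap R (Matrix m m R))) := by
  ext ⟨i, p⟩ ⟨j, q⟩
  simp [algebraMap_eq_diagonal, one_apply, diagonal_apply]

theorem commute_kronecker_one_compDiagonal_const [Fintype ι] [DecidableEq ι] [Fintype m]
    [DecidableEq m] [CommSemiring R] (A : Matrix ι ι R) (P : Matrix m m R) :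
    Commute (A ⊗ₖ (1 : Matrix m m R)) (compDiagonal fun _ => P) := by
  rw [compDiagonal_const, Commute, SemiconjBy, ← mul_kronecker_mul, ← mul_kronecker_mul]
  simp

theorem det_one_sub_kronecker_mul_compDiagonal [Fintype ι] [DecidableEq ι] [Fintype m]
    [DecidableEq m] [CommRing R] {J : Matrix m m R} (hJ : IsUnit J) {G : ι → Matrix m m R}
    (hG : ∀ i, J * G i * J⁻¹ = -(G i)ᵀ) (A : Matrix ι ι R) :
    det (1 - (A ⊗ₖ 1) * compDiagonal G) = det (1 + (Aᵀ ⊗ₖ 1) * compDiagonal G) := by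
  have hJdet := (isUnit_iff_isUnit_det J).mp hJ
  have hJJ : compDiagonal (fun _ : ι => J⁻¹) * compDiagonal (fun _ => J) = 1 := by
    rw [compDiagonal_mul_compDiagonal, nonsing_inv_mul J hJdet, compDiagonal_const,
      one_kronecker_one]
  have hconj : compDiagonal (fun _ => J⁻¹) * compDiagonal (fun i => (G i)ᵀ) *
      compDiagonal (fun _ => J) = -compDiagonal G := by
    simp only [compDiagonal_mul_compDiagonal, inv_mul_transpose_mul_eq_neg hJ (hG _),
      compDiagonal_neg]
  calc det (1 - (A ⊗ₖ 1) * compDiagonal G)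
      = det (1 - compDiagonal G * (A ⊗ₖ 1)) := by
        rw [sub_eq_add_neg, sub_eq_add_neg, ← Matrix.neg_mul, ← Matrix.mul_neg,
          det_one_add_mul_comm]
    _ = det (1 - (Aᵀ ⊗ₖ 1) * compDiagonal fun i => (G i)ᵀ) := by
        rw [← det_transpose, transpose_sub, transpose_one, transpose_mul, transpose_compDiagonal,
          ← kroneckerMap_transpose, transpose_one]
    _ = det (compDiagonal (fun _ => J⁻¹) * (1 - (Aᵀ ⊗ₖ 1) * compDiagonal fun i => (G i)ᵀ) *
          compDiagonal (fun _ => J)) :=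
        (det_conj_of_mul_eq_one hJJ (mul_eq_one_comm.mp hJJ)).symm
    _ = det (1 + (Aᵀ ⊗ₖ 1) * compDiagonal G) := by
        rw [Matrix.mul_sub, Matrix.sub_mul, Matrix.mul_one, hJJ, ← Matrix.mul_assoc,
          ← (commute_kronecker_one_compDiagonal_const Aᵀ J⁻¹).eq, Matrix.mul_assoc,
          Matrix.mul_assoc, ← Matrix.mul_assoc (compDiagonal _), hconj, Matrix.mul_neg,
          sub_neg_eq_add]

end Blocks

section Determinant

variable {m R : Type*} [Fintype m] [DecidableEq m] [CommRing R]

theorem det_one_sub_conj {U V : Matrix m m R} (hUV : U * V = 1) (X : Matrix m m R) :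
    det (1 - U * X * V) = det (1 - X) := by
  rw [← det_conj_of_mul_eq_one hUV (N := 1 - X) (mul_eq_one_comm.mp hUV), Matrix.mul_sub,
    Matrix.sub_mul, Matrix.mul_one, hUV]

theorem det_one_add_conj {U V : Matrix m m R} (hUV : U * V = 1) (X : Matrix m m R) :
    det (1 + U * X * V) = det (1 + X) := by
  rw [← det_conj_of_mul_eq_one hUV (N := 1 + X) (mul_eq_one_comm.mp hUV), Matrix.mul_add,
    Matrix.add_mul, Matrix.mul_one, hUV]

end Determinant

end Matrix

section

variable {n s : ℕ}

theorem smul_mblk (r h : ℝ) (K : Matrix (Fin n) (Fin n) ℝ) (c : Fin s → ℝ)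
    (A : Matrix (Fin s) (Fin s) ℝ) (F : Fin s → Matrix (Fin n) (Fin n) ℝ) :
    r • Mblk h K c A F = Mblk h K c (r • A) F := by
  ext p q
  simp [Mblk, mul_assoc]

theorem mblk_eq_conj (h : ℝ) (K : Matrix (Fin n) (Fin n) ℝ) (c : Fin s → ℝ)
    (A : Matrix (Fin s) (Fin s) ℝ) (F : Fin s → Matrix (Fin n) (Fin n) ℝ) :
    Mblk h K c A F = compDiagonal (fun i => exp ((c i * h) • K)) *
      ((A ⊗ₖ 1) * compDiagonal fun j => exp ((-(c j * h)) • K) * F j * exp ((c j * h) • K)) *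
      compDiagonal (fun j => exp ((-(c j * h)) • K)) := by
  have hMblk : Mblk h K c A F =
      comp _ _ _ _ ℝ (of fun i j => A i j • (exp (((c i - c j) * h) • K) * F j)) := rfl
  simp only [hMblk, kronecker_one_eq_comp, compDiagonal, ← compRingEquiv_apply, ← map_mul]
  congr 1
  ext1 i j
  rw [mul_diagonal, diagonal_mul, mul_diagonal, map_apply, of_apply,
    Algebra.algebraMap_eq_smul_one, smul_one_mul, mul_smul_comm, smul_mul_assoc]
  simp only [Matrix.mul_assoc]
  rw [exp_smul_mul_exp_smul, add_neg_cancel, zero_smul, exp_zero, Matrix.mul_one,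
    ← Matrix.mul_assoc, exp_smul_mul_exp_smul, ← sub_eq_add_neg, ← sub_mul]

end

/-- **Section 5.1, algebraic form.** For `K = J⁻¹·M` and `F_i = J⁻¹·S_i` with `J`
invertible skew-symmetric and `M`, `S_i` symmetric, the conjugation relations and the
VP condition hold. -/
theorem stmt_14 (n s : ℕ) (h : ℝ) (c : Fin s → ℝ)
    (J M : Matrix (Fin n) (Fin n) ℝ) (hJ : IsUnit J) (hJskew : Jᵀ = -J)
    (hM : Mᵀ = M)
    (S : Fin s → Matrix (Fin n) (Fin n) ℝ) (hS : ∀ i, (S i)ᵀ = S i)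
    (K : Matrix (Fin n) (Fin n) ℝ) (hK : K = J⁻¹ * M)
    (F : Fin s → Matrix (Fin n) (Fin n) ℝ) (hF : ∀ i, F i = J⁻¹ * S i) :
    (J * K * J⁻¹ = -Kᵀ) ∧ (∀ i, J * F i * J⁻¹ = -(F i)ᵀ) ∧
      ∀ A : Matrix (Fin s) (Fin s) ℝ,
        ((1 : Matrix (Fin s × Fin n) (Fin s × Fin n) ℝ) - h • Mblk h K c A F).det =
          (NormedSpace.exp (h • K)).det *
            ((1 : Matrix (Fin s × Fin n) (Fin s × Fin n) ℝ) + h • Mblk h K c Aᵀ F).det := by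
  have hKJ : J * K * J⁻¹ = -Kᵀ := hK ▸ conj_inv_mul_eq_neg_transpose hJ hJskew hM
  have hFJ : ∀ i, J * F i * J⁻¹ = -(F i)ᵀ := fun i =>
    hF i ▸ conj_inv_mul_eq_neg_transpose hJ hJskew (hS i)
  refine ⟨hKJ, hFJ, fun A => ?_⟩
  have hexp : (compDiagonal fun i => exp ((c i * h) • K)) *
      compDiagonal (fun i => exp ((-(c i * h)) • K)) = 1 := by
    simp only [compDiagonal_mul_compDiagonal, exp_smul_mul_exp_smul, add_neg_cancel, zero_smul,
      exp_zero, compDiagonal_const, one_kronecker_one]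
  have hG : ∀ j, J * (exp ((-(c j * h)) • K) * F j * exp ((c j * h) • K)) * J⁻¹ =
      -(exp ((-(c j * h)) • K) * F j * exp ((c j * h) • K))ᵀ := fun j =>
    conj_mul_mul_eq_neg_transpose hJ (by rw [conj_exp_smul hJ hKJ, neg_neg]) (hFJ j)
      (conj_exp_smul hJ hKJ _)
  rw [det_exp_smul_eq_one hJ hKJ, one_mul, smul_mblk, smul_mblk, mblk_eq_conj, mblk_eq_conj,
    det_one_sub_conj hexp, det_one_add_conj hexp, det_one_sub_kronecker_mul_compDiagonal hJ hG,
    transpose_smul]
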